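/- arXiv:hep-th/9303148 — 3 statements merged into one kernel-verified Lean document; each statement's English description precedes it below -/
import Mathlib

section
/- The assignment ρ(u^i_j) defined by ρ₂(u₁) = Q₁₂ where Q = R₂₁R₁₂ extends to an algebra representation of the braided matrix algebra B(R): i.e., the matrices Q satisfy the defining relations R₂₁ Q₁₃ R₁₂ Q₂₃ = Q₂₃ R₂₁ Q₁₃ R₁₂ of B(R) in matrix form. -/
open Matrix

variable {k : Type*} [Field k] {n : ℕ}

/-- Pairs of indices, labelling a basis of `V ⊗ V` (or multi-indices `I = (i₀, i₁)`). -/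
abbrev I2 (n : ℕ) := Fin n × Fin n

/-- Triples of indices, labelling a basis of `V ⊗ V ⊗ V`. -/
abbrev I3 (n : ℕ) := Fin n × Fin n × Fin n

/-- `A₁₂ = A ⊗ id`, the lift of an operator on `V ⊗ V` to the first two factors of
`V ⊗ V ⊗ V`. -/
def amp12 (A : Matrix (I2 n) (I2 n) k) : Matrix (I3 n) (I3 n) k :=
  Matrix.of fun p q => A (p.1, p.2.1) (q.1, q.2.1) * (if p.2.2 = q.2.2 then 1 else 0)

/-- `A₁₃`, acting on the first and third factors of `V ⊗ V ⊗ V`. -/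
def amp13 (A : Matrix (I2 n) (I2 n) k) : Matrix (I3 n) (I3 n) k :=
  Matrix.of fun p q => A (p.1, p.2.2) (q.1, q.2.2) * (if p.2.1 = q.2.1 then 1 else 0)

/-- `A₂₃`, acting on the last two factors of `V ⊗ V ⊗ V`. -/
def amp23 (A : Matrix (I2 n) (I2 n) k) : Matrix (I3 n) (I3 n) k :=
  Matrix.of fun p q => A (p.2.1, p.2.2) (q.2.1, q.2.2) * (if p.1 = q.1 then 1 else 0)

/-- `A₂₁ = τ ∘ A ∘ τ`, conjugation by the flip of the two tensor factors. -/
def flipM (A : Matrix (I2 n) (I2 n) k) : Matrix (I2 n) (I2 n) k :=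
  Matrix.of fun p q => A (p.2, p.1) (q.2, q.1)

/-- The quantum Yang–Baxter equation `R₁₂R₁₃R₂₃ = R₂₃R₁₃R₁₂`. -/
def QYBE (R : Matrix (I2 n) (I2 n) k) : Prop :=
  amp12 R * amp13 R * amp23 R = amp23 R * amp13 R * amp12 R

/-- `Rtil` is the second inverse `R̃ = ((R^{t₂})⁻¹)^{t₂}` of `R`, characterized by
`R̃ⁱₐᵇₗ Rᵃⱼᵏᵦ = δⁱⱼ δᵏₗ = Rⁱₐᵇₗ R̃ᵃⱼᵏᵦ` (sum over `a`, `b`).  Here the entry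
`R ((i,k),(j,l))` denotes `Rⁱⱼᵏₗ`. -/
def IsSecondInverse (R Rtil : Matrix (I2 n) (I2 n) k) : Prop :=
  (∀ i j kk l : Fin n, ∑ a, ∑ b, Rtil (i, b) (a, l) * R (a, kk) (j, b)
      = (if i = j then (1 : k) else 0) * (if kk = l then 1 else 0)) ∧
  (∀ i j kk l : Fin n, ∑ a, ∑ b, R (i, b) (a, l) * Rtil (a, kk) (j, b)
      = (if i = j then (1 : k) else 0) * (if kk = l then 1 else 0))

/-- The structure constants
`c^{IJ}_K = R̃ᵃ_{i₁}{}^{j₀}_b R⁻¹{}ᵇ_{k₀}{}^{i₀}_c R^{k₁}_n{}ᶜ_m Rᵐₐ{}ⁿ_{j₁}`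
of the matrix braided-Lie algebra associated to a bi-invertible R-matrix
(repeated indices summed). -/
def braidedC (R Rinv Rtil : Matrix (I2 n) (I2 n) k) (I J K : I2 n) : k :=
  ∑ a, ∑ b, ∑ c, ∑ m, ∑ nn,
    Rtil (a, J.1) (I.2, b) * Rinv (b, I.1) (K.1, c) *
      R (K.2, c) (nn, m) * R (m, nn) (a, J.2)

/-! The relation `R₂₁Q₁₃R₁₂Q₂₃ = Q₂₃R₂₁Q₁₃R₁₂` for `Q = R₂₁R₁₂` is an identity between words
in `R₁₂, R₁₃, R₂₃, R₂₁, R₃₁, R₃₂` on `V ⊗ V ⊗ V`. Relabelling the three tensor legs turns the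
Yang–Baxter equation `R₁₂R₁₃R₂₃ = R₂₃R₁₃R₁₂` into three further braid relations, and four
braid moves carry the left-hand word `R₂₁R₃₁R₁₃R₁₂R₃₂R₂₃` into the right-hand word
`R₃₂R₂₃R₂₁R₃₁R₁₃R₁₂`. Reading off matrix entries gives the relations of `B(R)`. -/

section Amplification

variable (A B : Matrix (I2 n) (I2 n) k)

lemma amp12_mul : amp12 (A * B) = amp12 A * amp12 B := by
  ext p q
  simp only [amp12, mul_apply, of_apply, Fintype.sum_prod_type]
  simp [mul_ite, ite_mul]

lemma amp13_mul : amp13 (A * B) = amp13 A * amp13 B := by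
  ext p q
  simp only [amp13, mul_apply, of_apply, Fintype.sum_prod_type]
  simp [mul_ite, ite_mul]

lemma amp23_mul : amp23 (A * B) = amp23 A * amp23 B := by
  ext p q
  simp only [amp23, mul_apply, of_apply, Fintype.sum_prod_type]
  simp [mul_ite, ite_mul]

end Amplification

section LegRelabelling

def legSwap23 : I3 n ≃ I3 n where
  toFun p := (p.1, p.2.2, p.2.1)
  invFun p := (p.1, p.2.2, p.2.1)

def legSwap13 : I3 n ≃ I3 n where
  toFun p := (p.2.2, p.2.1, p.1)
  invFun p := (p.2.2, p.2.1, p.1)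

def legCycle : I3 n ≃ I3 n where
  toFun p := (p.2.1, p.2.2, p.1)
  invFun p := (p.2.2, p.1, p.2.1)

variable (A : Matrix (I2 n) (I2 n) k)

lemma amp12_submatrix_legSwap23 : (amp12 A).submatrix legSwap23 legSwap23 = amp13 A := by
  ext; simp [amp12, amp13, legSwap23]

lemma amp13_submatrix_legSwap23 : (amp13 A).submatrix legSwap23 legSwap23 = amp12 A := by
  ext; simp [amp12, amp13, legSwap23]

lemma amp23_submatrix_legSwap23 :
    (amp23 A).submatrix legSwap23 legSwap23 = amp23 (flipM A) := by
  ext; simp [amp23, flipM, legSwap23]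

lemma amp12_submatrix_legSwap13 :
    (amp12 A).submatrix legSwap13 legSwap13 = amp23 (flipM A) := by
  ext; simp [amp12, amp23, flipM, legSwap13]

lemma amp13_submatrix_legSwap13 :
    (amp13 A).submatrix legSwap13 legSwap13 = amp13 (flipM A) := by
  ext; simp [amp13, flipM, legSwap13]

lemma amp23_submatrix_legSwap13 :
    (amp23 A).submatrix legSwap13 legSwap13 = amp12 (flipM A) := by
  ext; simp [amp12, amp23, flipM, legSwap13]

lemma amp12_submatrix_legCycle : (amp12 A).submatrix legCycle legCycle = amp23 A := by
  ext; simp [amp12, amp23, legCycle]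

lemma amp13_submatrix_legCycle :
    (amp13 A).submatrix legCycle legCycle = amp12 (flipM A) := by
  ext; simp [amp12, amp13, flipM, legCycle]

lemma amp23_submatrix_legCycle :
    (amp23 A).submatrix legCycle legCycle = amp13 (flipM A) := by
  ext; simp [amp13, amp23, flipM, legCycle]

end LegRelabelling

namespace QYBE

variable {R : Matrix (I2 n) (I2 n) k}

lemma swap23 (h : QYBE R) :
    amp13 R * amp12 R * amp23 (flipM R) = amp23 (flipM R) * amp12 R * amp13 R := by
  simpa only [← submatrix_mul_equiv _ _ _ legSwap23 _, amp12_submatrix_legSwap23,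
    amp13_submatrix_legSwap23, amp23_submatrix_legSwap23]
    using congrArg (·.submatrix legSwap23 legSwap23) h

lemma swap13 (h : QYBE R) :
    amp23 (flipM R) * amp13 (flipM R) * amp12 (flipM R)
      = amp12 (flipM R) * amp13 (flipM R) * amp23 (flipM R) := by
  simpa only [← submatrix_mul_equiv _ _ _ legSwap13 _, amp12_submatrix_legSwap13,
    amp13_submatrix_legSwap13, amp23_submatrix_legSwap13]
    using congrArg (·.submatrix legSwap13 legSwap13) h

lemma cycle (h : QYBE R) :
    amp23 R * amp12 (flipM R) * amp13 (flipM R)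
      = amp13 (flipM R) * amp12 (flipM R) * amp23 R := by
  simpa only [← submatrix_mul_equiv _ _ _ legCycle _, amp12_submatrix_legCycle,
    amp13_submatrix_legCycle, amp23_submatrix_legCycle]
    using congrArg (·.submatrix legCycle legCycle) h

end QYBE

/-- With `Q = R₂₁R₁₂`, `Q₁₃` and `Q₂₃` are `ρ(u₁)` and `ρ(u₂)`: legs 1 and 2 carry the two
copies of `u` in the relation of `B(R)`, leg 3 is the representation space `kⁿ`. -/
def braidedLHS (R Q : Matrix (I2 n) (I2 n) k) : Matrix (I3 n) (I3 n) k :=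
  amp12 (flipM R) * (amp13 Q * (amp12 R * amp23 Q))

def braidedRHS (R Q : Matrix (I2 n) (I2 n) k) : Matrix (I3 n) (I3 n) k :=
  amp23 Q * (amp12 (flipM R) * (amp13 Q * amp12 R))

lemma braidedLHS_eq_braidedRHS {R : Matrix (I2 n) (I2 n) k} (h : QYBE R) :
    braidedLHS R (flipM R * R) = braidedRHS R (flipM R * R) := by
  simp only [braidedLHS, braidedRHS, amp13_mul, amp23_mul]
  have h12 : amp12 R * amp13 R * amp23 R = amp23 R * amp13 R * amp12 R := h
  have h23 := h.swap23
  have h13 := h.swap13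
  have hcyc := h.cycle
  set S := amp12 R
  set T := amp13 R
  set U := amp23 R
  set S' := amp12 (flipM R)
  set T' := amp13 (flipM R)
  set U' := amp23 (flipM R)
  calc S' * (T' * T * (S * (U' * U)))
      = S' * T' * (U' * S * T) * U := by rw [← h23]; simp only [mul_assoc]
    _ = S' * T' * U' * (U * T * S) := by rw [← h12]; simp only [mul_assoc]
    _ = U' * (T' * S' * U) * T * S := by rw [← h13]; simp only [mul_assoc]
    _ = U' * U * (S' * (T' * T * S)) := by rw [← hcyc]; simp only [mul_assoc]

lemma braidedLHS_apply (R Q : Matrix (I2 n) (I2 n) k) (K i j L x y : Fin n) :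
    braidedLHS R Q (i, K, x) (j, L, y)
      = ∑ a, ∑ b, ∑ c, ∑ d, (R (K, i) (a, b) * R (c, a) (j, d)) *
          ∑ z, Q (b, x) (c, z) * Q (d, z) (L, y) := by
  simp only [braidedLHS, mul_apply, amp12, amp13, amp23, flipM, of_apply,
    Fintype.sum_prod_type, mul_ite, ite_mul, mul_one, mul_zero, zero_mul,
    Finset.sum_ite_irrel, Finset.sum_const_zero, Finset.sum_ite_eq, Finset.sum_ite_eq',
    Finset.mem_univ, if_true, Finset.mul_sum]
  rw [Finset.sum_comm]
  refine Finset.sum_congr rfl fun a _ => Finset.sum_congr rfl fun b _ =>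
    Finset.sum_congr rfl fun c _ => ?_
  rw [Finset.sum_comm]
  exact Finset.sum_congr rfl fun d _ => Finset.sum_congr rfl fun z _ => by ring

lemma braidedRHS_apply (R Q : Matrix (I2 n) (I2 n) k) (K i j L x y : Fin n) :
    braidedRHS R Q (i, K, x) (j, L, y)
      = ∑ a, ∑ b, ∑ c, ∑ d, (R (a, i) (b, c) * R (d, b) (j, L)) *
          ∑ z, Q (K, x) (a, z) * Q (c, z) (d, y) := by
  simp only [braidedRHS, mul_apply, amp12, amp13, amp23, flipM, of_apply,
    Fintype.sum_prod_type, mul_ite, ite_mul, mul_one, mul_zero, zero_mul,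
    Finset.sum_ite_irrel, Finset.sum_const_zero, Finset.sum_ite_eq, Finset.sum_ite_eq',
    Finset.mem_univ, if_true, Finset.mul_sum]
  refine Finset.sum_congr rfl fun a _ => ?_
  rw [Finset.sum_comm]
  refine (Finset.sum_congr rfl fun c _ => Finset.sum_comm).trans ?_
  rw [Finset.sum_comm]
  refine Finset.sum_congr rfl fun b _ => Finset.sum_congr rfl fun c _ => ?_
  rw [Finset.sum_comm]
  exact Finset.sum_congr rfl fun d _ => Finset.sum_congr rfl fun z _ => by ring

theorem braided_matrix_representation_general (R : Matrix (I2 n) (I2 n) k)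
    (hYB : QYBE R) :
    ∀ K i j L : Fin n,
      (∑ a, ∑ b, ∑ c, ∑ d, (R (K, i) (a, b) * R (c, a) (j, d)) •
          ((Matrix.of fun x y => (flipM R * R) (b, x) (c, y)) *
            (Matrix.of fun x y => (flipM R * R) (d, x) (L, y))))
        = ∑ a, ∑ b, ∑ c, ∑ d, (R (a, i) (b, c) * R (d, b) (j, L)) •
          ((Matrix.of fun x y => (flipM R * R) (K, x) (a, y)) *
            (Matrix.of fun x y => (flipM R * R) (c, x) (d, y))) := by
  intro K i j L
  set Q := flipM R * R
  ext x y
  simp only [Matrix.sum_apply, Matrix.smul_apply, mul_apply, of_apply, smul_eq_mul]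
  rw [← braidedLHS_apply, ← braidedRHS_apply, braidedLHS_eq_braidedRHS hYB]

/-- The representation `ρ` of the braided matrices `B(R)` on `kⁿ` determined on generators by
`ρ₂(u₁) = Q₁₂`, `Q = R₂₁R₁₂`: the matrices `ρ(uⁱⱼ)ᵃᵦ = Q ((i,a),(j,b))` satisfy the defining
relations `R^k_a{}^i_b u^b_c R^c_j{}^a_d u^d_l = u^k_a R^a_b{}^i_c u^c_d R^d_j{}^b_l` of
`B(R)`. -/
theorem braided_matrix_representation (R : Matrix (I2 n) (I2 n) k)
    (hinv : IsUnit R) (hYB : QYBE R) :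
    ∀ K i j L : Fin n,
      (∑ a, ∑ b, ∑ c, ∑ d, (R (K, i) (a, b) * R (c, a) (j, d)) •
          ((Matrix.of fun x y => (flipM R * R) (b, x) (c, y)) *
            (Matrix.of fun x y => (flipM R * R) (d, x) (L, y))))
        = ∑ a, ∑ b, ∑ c, ∑ d, (R (a, i) (b, c) * R (d, b) (j, L)) •
          ((Matrix.of fun x y => (flipM R * R) (K, x) (a, y)) *
            (Matrix.of fun x y => (flipM R * R) (c, x) (d, y))) :=
  braided_matrix_representation_general R hYB
end

section
/- For the gl_{1|1} R-matrix R = ((q,0,0,0),(0,1,q−q⁻¹,0),(0,0,1,0),(0,0,0,−q⁻¹)) with q² ≠ 0,1, the braided-Lie brackets computed from c^{IJ}_K satisfy [b,c] = −(q²−1)ξ = q²[c,b], [a,a] = a, [a,b] = q⁻²b, [a,c] = q²c, and [ξ,a] = −(q²−1)²q⁻² ξ, where ξ = d − a. -/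
/-!
A left inverse of `R` is its inverse, and the first half of `IsSecondInverse R Rtil` says that
`Rtil^{t₂}` is a left inverse of `R^{t₂}`, so `Rinv` and `Rtil` are forced to be the explicit
matrices `Rgl11Inv` and `Rgl11Tilde`. With these, each bracket of two basis vectors is a single
vector of structure constants `c^{IJ}_•`, and the identities are a finite computation.
-/

open Matrix

variable {k : Type*} [Field k] {n : ℕ}

/-- The standard `GL_q(2)` R-matrix `((q,0,0,0),(0,1,q−q⁻¹,0),(0,0,1,0),(0,0,0,q))`,
with rows labelled `(i,k)` and columns `(j,l)` in the order `(1,1),(1,2),(2,1),(2,2)`. -/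
def Rgl2 (k : Type*) [Field k] (q : k) : Matrix (I2 2) (I2 2) k :=
  Matrix.of fun p r =>
    if p = r then (if p = ((0 : Fin 2), (0 : Fin 2)) ∨ p = (1, 1) then q else 1)
    else if p = ((0 : Fin 2), (1 : Fin 2)) ∧ r = (1, 0) then q - q⁻¹ else 0

/-- The `gl_{1|1}` (Alexander–Conway) R-matrix
`((q,0,0,0),(0,1,q−q⁻¹,0),(0,0,1,0),(0,0,0,−q⁻¹))`. -/
def Rgl11 (k : Type*) [Field k] (q : k) : Matrix (I2 2) (I2 2) k :=
  Matrix.of fun p r =>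
    if p = r then
      (if p = ((0 : Fin 2), (0 : Fin 2)) then q else if p = (1, 1) then -q⁻¹ else 1)
    else if p = ((0 : Fin 2), (1 : Fin 2)) ∧ r = (1, 0) then q - q⁻¹ else 0

/-- The braided-Lie bracket extended bilinearly to coefficient vectors with respect to the
basis `u^I`: `Br(x, y)_K = Σ_{I,J} x_I y_J c^{IJ}_K`. -/
def Br {k : Type*} [Field k] (R Rinv Rtil : Matrix (I2 2) (I2 2) k)
    (x y : I2 2 → k) : I2 2 → k :=
  fun K => ∑ I, ∑ J, x I * y J * braidedC R Rinv Rtil I J K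

/-- Coefficient vector of the generator `a = u¹₁`. -/
def va (k : Type*) [Field k] : I2 2 → k := fun K => if K = (0, 0) then 1 else 0

/-- Coefficient vector of the generator `b = u¹₂`. -/
def vb (k : Type*) [Field k] : I2 2 → k := fun K => if K = (0, 1) then 1 else 0

/-- Coefficient vector of the generator `c = u²₁`. -/
def vc (k : Type*) [Field k] : I2 2 → k := fun K => if K = (1, 0) then 1 else 0

/-- Coefficient vector of the generator `d = u²₂`. -/
def vd (k : Type*) [Field k] : I2 2 → k := fun K => if K = (1, 1) then 1 else 0

/-- The partial transpose `A^{t₂}` in the second tensor factor. -/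
def transposeSnd {α : Type*} (A : Matrix (I2 n) (I2 n) α) : Matrix (I2 n) (I2 n) α :=
  Matrix.of fun p r => A (p.1, r.2) (r.1, p.2)

theorem transposeSnd_transposeSnd {α : Type*} (A : Matrix (I2 n) (I2 n) α) :
    transposeSnd (transposeSnd A) = A :=
  rfl

theorem transposeSnd_injective {α : Type*} :
    Function.Injective (transposeSnd (α := α) (n := n)) :=
  Function.LeftInverse.injective transposeSnd_transposeSnd

theorem IsSecondInverse.transposeSnd_mul {R Rtil : Matrix (I2 n) (I2 n) k}
    (ht : IsSecondInverse R Rtil) : transposeSnd Rtil * transposeSnd R = 1 := by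
  ext ⟨i, l⟩ ⟨j, kk⟩
  simp only [mul_apply, Fintype.sum_prod_type, transposeSnd, of_apply, ht.1 i j kk l,
    one_apply, Prod.mk.injEq, ite_and, eq_comm (a := l)]
  split_ifs <;> simp

theorem IsSecondInverse.eq_of_transposeSnd_mul {R Rtil X : Matrix (I2 n) (I2 n) k}
    (ht : IsSecondInverse R Rtil) (h : transposeSnd R * transposeSnd X = 1) : Rtil = X :=
  transposeSnd_injective (left_inv_eq_right_inv ht.transposeSnd_mul h)

theorem Br_indicator (R Rinv Rtil : Matrix (I2 2) (I2 2) k) (I J : I2 2) :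
    Br R Rinv Rtil (fun K => if K = I then 1 else 0) (fun K => if K = J then 1 else 0) =
      braidedC R Rinv Rtil I J := by
  funext K
  simp [Br]

theorem Br_sub_left (R Rinv Rtil : Matrix (I2 2) (I2 2) k) (x x' y : I2 2 → k) :
    Br R Rinv Rtil (x - x') y = Br R Rinv Rtil x y - Br R Rinv Rtil x' y := by
  funext K
  simp [Br, sub_mul, Finset.sum_sub_distrib]

def Rgl11Inv (k : Type*) [Field k] (q : k) : Matrix (I2 2) (I2 2) k :=
  Matrix.of fun p r =>
    if p = r then
      (if p = ((0 : Fin 2), (0 : Fin 2)) then q⁻¹ else if p = (1, 1) then -q else 1)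
    else if p = ((0 : Fin 2), (1 : Fin 2)) ∧ r = (1, 0) then -(q - q⁻¹) else 0

def Rgl11Tilde (k : Type*) [Field k] (q : k) : Matrix (I2 2) (I2 2) k :=
  Matrix.of fun p r =>
    if p = r then
      (if p = ((0 : Fin 2), (0 : Fin 2)) then q⁻¹ else if p = (1, 1) then -q else 1)
    else if p = ((0 : Fin 2), (1 : Fin 2)) ∧ r = (1, 0) then q - q⁻¹ else 0

theorem Rgl11_mul_Rgl11Inv {q : k} (hq : q ≠ 0) : Rgl11 k q * Rgl11Inv k q = 1 := by
  ext ⟨i, j⟩ ⟨a, b⟩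
  fin_cases i <;> fin_cases j <;> fin_cases a <;> fin_cases b <;>
    simp [mul_apply, Fintype.sum_prod_type, Rgl11, Rgl11Inv, one_apply, hq]

theorem transposeSnd_Rgl11_mul {q : k} (hq : q ≠ 0) :
    transposeSnd (Rgl11 k q) * transposeSnd (Rgl11Tilde k q) = 1 := by
  ext ⟨i, j⟩ ⟨a, b⟩
  fin_cases i <;> fin_cases j <;> fin_cases a <;> fin_cases b <;>
    simp [mul_apply, Fintype.sum_prod_type, Rgl11, Rgl11Tilde, transposeSnd, one_apply, hq,
      mul_comm]

abbrev gl11Br (q : k) : (I2 2 → k) → (I2 2 → k) → I2 2 → k :=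
  Br (Rgl11 k q) (Rgl11Inv k q) (Rgl11Tilde k q)

theorem gl11Br_b_c {q : k} (hq : q ≠ 0) :
    gl11Br q (vb k) (vc k) = (-(q ^ 2 - 1)) • (vd k - va k) := by
  unfold vb vc
  rw [gl11Br, Br_indicator]
  ext ⟨i, j⟩
  fin_cases i <;> fin_cases j <;>
    simp [braidedC, Fin.sum_univ_two, Rgl11, Rgl11Inv, Rgl11Tilde, va, vd, hq]
  all_goals grind

theorem gl11Br_c_b {q : k} (hq : q ≠ 0) :
    gl11Br q (vc k) (vb k) = (-(q ^ 2 - 1) * q⁻¹ ^ 2) • (vd k - va k) := by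
  unfold vb vc
  rw [gl11Br, Br_indicator]
  ext ⟨i, j⟩
  fin_cases i <;> fin_cases j <;>
    simp [braidedC, Fin.sum_univ_two, Rgl11, Rgl11Inv, Rgl11Tilde, va, vd, hq]
  all_goals grind

theorem gl11Br_a_a {q : k} (hq : q ≠ 0) : gl11Br q (va k) (va k) = va k := by
  unfold va
  rw [gl11Br, Br_indicator]
  ext ⟨i, j⟩
  fin_cases i <;> fin_cases j <;>
    simp [braidedC, Fin.sum_univ_two, Rgl11, Rgl11Inv, Rgl11Tilde, hq]

theorem gl11Br_a_b {q : k} (hq : q ≠ 0) : gl11Br q (va k) (vb k) = (q⁻¹ ^ 2) • vb k := by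
  unfold va vb
  rw [gl11Br, Br_indicator]
  ext ⟨i, j⟩
  fin_cases i <;> fin_cases j <;>
    simp [braidedC, Fin.sum_univ_two, Rgl11, Rgl11Inv, Rgl11Tilde, hq]
  all_goals grind

theorem gl11Br_a_c {q : k} (hq : q ≠ 0) : gl11Br q (va k) (vc k) = (q ^ 2) • vc k := by
  unfold va vc
  rw [gl11Br, Br_indicator]
  ext ⟨i, j⟩
  fin_cases i <;> fin_cases j <;>
    simp [braidedC, Fin.sum_univ_two, Rgl11, Rgl11Inv, Rgl11Tilde, hq]
  all_goals grind

theorem gl11Br_d_sub_a_a {q : k} (hq : q ≠ 0) :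
    gl11Br q (vd k - va k) (va k) = (-((q ^ 2 - 1) ^ 2 * q⁻¹ ^ 2)) • (vd k - va k) := by
  rw [gl11Br, Br_sub_left]
  unfold va vd
  rw [Br_indicator, Br_indicator]
  ext ⟨i, j⟩
  fin_cases i <;> fin_cases j <;>
    simp [braidedC, Fin.sum_univ_two, Rgl11, Rgl11Inv, Rgl11Tilde, hq]
  all_goals grind

theorem gl11_braided_brackets_general (q : k) (hq0 : q ≠ 0)
    (Rinv Rtil : Matrix (I2 2) (I2 2) k)
    (h2 : Rinv * Rgl11 k q = 1)
    (ht : IsSecondInverse (Rgl11 k q) Rtil) :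
    let R := Rgl11 k q
    let ξv : I2 2 → k := vd k - va k
    Br R Rinv Rtil (vb k) (vc k) = (-(q ^ 2 - 1)) • ξv
    ∧ Br R Rinv Rtil (vb k) (vc k) = (q ^ 2) • Br R Rinv Rtil (vc k) (vb k)
    ∧ Br R Rinv Rtil (va k) (va k) = va k
    ∧ Br R Rinv Rtil (va k) (vb k) = ((q⁻¹) ^ 2) • vb k
    ∧ Br R Rinv Rtil (va k) (vc k) = (q ^ 2) • vc k
    ∧ Br R Rinv Rtil ξv (va k) = (-((q ^ 2 - 1) ^ 2 * (q⁻¹) ^ 2)) • ξv := by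
  obtain rfl : Rinv = Rgl11Inv k q := left_inv_eq_right_inv h2 (Rgl11_mul_Rgl11Inv hq0)
  obtain rfl : Rtil = Rgl11Tilde k q := ht.eq_of_transposeSnd_mul (transposeSnd_Rgl11_mul hq0)
  refine ⟨gl11Br_b_c hq0, ?_, gl11Br_a_a hq0, gl11Br_a_b hq0, gl11Br_a_c hq0,
    gl11Br_d_sub_a_a hq0⟩
  change gl11Br q (vb k) (vc k) = q ^ 2 • gl11Br q (vc k) (vb k)
  rw [gl11Br_b_c hq0, gl11Br_c_b hq0, smul_smul]
  congr 1
  field_simp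

/-- For the `gl_{1|1}` R-matrix with `q² ≠ 0,1`, the braided-Lie brackets satisfy
`[b,c] = −(q²−1)ξ = q²[c,b]`, `[a,a] = a`, `[a,b] = q⁻²b`, `[a,c] = q²c`, and
`[ξ,a] = −(q²−1)²q⁻² ξ`, where `ξ = d − a`. -/
theorem gl11_braided_brackets (q : k) (hq0 : q ≠ 0) (hq1 : q ^ 2 ≠ 1)
    (Rinv Rtil : Matrix (I2 2) (I2 2) k)
    (h1 : Rgl11 k q * Rinv = 1) (h2 : Rinv * Rgl11 k q = 1)
    (ht : IsSecondInverse (Rgl11 k q) Rtil) :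
    let R := Rgl11 k q
    let ξv : I2 2 → k := vd k - va k
    Br R Rinv Rtil (vb k) (vc k) = (-(q ^ 2 - 1)) • ξv
    ∧ Br R Rinv Rtil (vb k) (vc k) = (q ^ 2) • Br R Rinv Rtil (vc k) (vb k)
    ∧ Br R Rinv Rtil (va k) (va k) = va k
    ∧ Br R Rinv Rtil (va k) (vb k) = ((q⁻¹) ^ 2) • vb k
    ∧ Br R Rinv Rtil (va k) (vc k) = (q ^ 2) • vc k
    ∧ Br R Rinv Rtil ξv (va k) = (-((q ^ 2 - 1) ^ 2 * (q⁻¹) ^ 2)) • ξv :=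
  gl11_braided_brackets_general q hq0 Rinv Rtil h2 ht
end

section
/- For the standard GL_q(2) R-matrix with generic q, the braided dimension dim(𝓛) = R̃^K_J{}^J_K (braided trace of the identity built from the induced multi-index R-matrix) equals [4]_q = (1−q⁻⁸)/(1−q⁻²). -/
open Matrix

variable {k : Type*} [Field k] {n : ℕ}

/-- The induced multi-index braiding matrix
`𝐑^K_L{}^I_J = R^{i₀}_a{}^d_{l₀} R⁻¹{}^a_{j₀}{}^{l₁}_b R^{j₁}_c{}^b_{k₁} R̃^c_{i₁}{}^{k₀}_d`
(repeated indices summed), with rows `(K, I)` and columns `(L, J)`. -/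
def bigR (R Rinv Rtil : Matrix (I2 n) (I2 n) k) :
    Matrix (I2 n × I2 n) (I2 n × I2 n) k :=
  Matrix.of fun P Q =>
    ∑ a, ∑ b, ∑ c, ∑ d,
      R (P.2.1, d) (a, Q.1.1) * Rinv (a, Q.1.2) (Q.2.1, b) *
        R (Q.2.2, b) (c, P.1.2) * Rtil (c, P.1.1) (P.2.2, d)

/-- `Btil` is the second inverse of the multi-index matrix `B`. -/
def IsBigSecondInverse (B Btil : Matrix (I2 n × I2 n) (I2 n × I2 n) k) : Prop :=
  (∀ I J K L : I2 n, ∑ A, ∑ Bb, Btil (I, Bb) (A, L) * B (A, K) (J, Bb)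
      = (if I = J then (1 : k) else 0) * (if K = L then 1 else 0)) ∧
  (∀ I J K L : I2 n, ∑ A, ∑ Bb, B (I, Bb) (A, L) * Btil (A, K) (J, Bb)
      = (if I = J then (1 : k) else 0) * (if K = L then 1 else 0))

/-- The braided dimension `dim(𝓛) = 𝐑̃^K_J{}^J_K` (sum over `J`, `K`). -/
def braidedDim (Btil : Matrix (I2 n × I2 n) (I2 n × I2 n) k) : k :=
  ∑ J, ∑ K, Btil (K, J) (J, K)

/-- The braided Killing form `g^{IJ} = c^{IA}_B c^{JL}_A 𝐑̃^K_L{}^B_K`. -/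
def killingG (R Rinv Rtil : Matrix (I2 n) (I2 n) k)
    (Btil : Matrix (I2 n × I2 n) (I2 n × I2 n) k) (I J : I2 n) : k :=
  ∑ A, ∑ B, ∑ L, ∑ K,
    braidedC R Rinv Rtil I A B * braidedC R Rinv Rtil J L A * Btil (K, B) (L, K)

/-- The braided trace `T^I = c^{IJ}_A 𝐑̃^K_J{}^A_K`. -/
def braidedT (R Rinv Rtil : Matrix (I2 n) (I2 n) k)
    (Btil : Matrix (I2 n × I2 n) (I2 n × I2 n) k) (I : I2 n) : k :=
  ∑ J, ∑ A, ∑ K, braidedC R Rinv Rtil I J A * Btil (K, A) (J, K)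

/-- `δ^I = δ^{i₀}_{i₁}`. -/
def deltaI (k : Type*) [Field k] {n : ℕ} (I : I2 n) : k := if I.1 = I.2 then 1 else 0

/-!
The inverse and the second inverse of `R` are unique, so `𝐑` is an explicit `16 × 16` matrix.
The partial transpose `t₂` turns second inverses into ordinary inverses, and in its terms the
braided dimension is `vec 1 ⬝ᵥ 𝐑̃^{t₂} *ᵥ vec 1`. Rather than inverting `𝐑^{t₂}`, exhibit a row
vector `w` with `w ᵥ* 𝐑^{t₂} = vec 1` (necessarily `w = vec 1 ᵥ* 𝐑̃^{t₂}`); then the braided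
dimension is `w ⬝ᵥ vec 1 = 1 + q⁻² + q⁻⁴ + q⁻⁶ = [4]_q`.
-/

/-- `A^{t₂}`, the transpose in the second tensor factor. -/
def partialTranspose {α R : Type*} (A : Matrix (α × α) (α × α) R) : Matrix (α × α) (α × α) R :=
  Matrix.of fun p r => A (p.1, r.2) (r.1, p.2)

theorem partialTranspose_involutive {α R : Type*} :
    Function.Involutive (partialTranspose : Matrix (α × α) (α × α) R → _) :=
  fun _ => rfl

theorem partialTranspose_mul_partialTranspose_eq_one_iff {α R : Type*} [Fintype α]
    [DecidableEq α] [Semiring R] {A B : Matrix (α × α) (α × α) R} :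
    partialTranspose A * partialTranspose B = 1 ↔
      ∀ i j kk l : α, ∑ a, ∑ b, A (i, b) (a, l) * B (a, kk) (j, b)
        = (if i = j then (1 : R) else 0) * (if kk = l then 1 else 0) := by
  simp only [← Matrix.ext_iff, Prod.forall, partialTranspose, mul_apply, of_apply,
    Fintype.sum_prod_type, one_apply, Prod.mk.injEq, ite_and, ite_mul, one_mul, zero_mul]
  refine ⟨fun h i j kk l => ?_, fun h i l j kk => ?_⟩ <;> simp only [h, eq_comm]

theorem isSecondInverse_iff {R Rtil : Matrix (I2 n) (I2 n) k} :
    IsSecondInverse R Rtil ↔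
      partialTranspose Rtil * partialTranspose R = 1 ∧
        partialTranspose R * partialTranspose Rtil = 1 := by
  simp only [IsSecondInverse, partialTranspose_mul_partialTranspose_eq_one_iff]

theorem isBigSecondInverse_iff {B Btil : Matrix (I2 n × I2 n) (I2 n × I2 n) k} :
    IsBigSecondInverse B Btil ↔
      partialTranspose Btil * partialTranspose B = 1 ∧
        partialTranspose B * partialTranspose Btil = 1 := by
  simp only [IsBigSecondInverse, partialTranspose_mul_partialTranspose_eq_one_iff]

theorem braidedDim_eq_vec_one_dotProduct (Btil : Matrix (I2 n × I2 n) (I2 n × I2 n) k) :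
    braidedDim Btil =
      (1 : Matrix (I2 n) (I2 n) k).vec ⬝ᵥ partialTranspose Btil *ᵥ (1 : Matrix _ _ k).vec := by
  simp only [braidedDim, dotProduct, mulVec, vec, one_apply, partialTranspose, of_apply,
    Fintype.sum_prod_type (α₁ := I2 n) (α₂ := I2 n), ite_mul, mul_ite, one_mul, mul_one,
    zero_mul, mul_zero, Finset.sum_ite_eq', Finset.mem_univ, if_true]
  exact Finset.sum_comm

theorem dotProduct_mulVec_eq_of_vecMul_eq {m R : Type*} [Fintype m] [DecidableEq m] [Semiring R]
    {A B : Matrix m m R} (hAB : A * B = 1) {u w : m → R} (hw : w ᵥ* A = u) (v : m → R) :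
    u ⬝ᵥ B *ᵥ v = w ⬝ᵥ v := by
  rw [← hw, ← dotProduct_mulVec, mulVec_mulVec, hAB, one_mulVec]

def Rgl2Inv (k : Type*) [Field k] (q : k) : Matrix (I2 2) (I2 2) k :=
  Matrix.of fun p r =>
    if p = r then (if p = ((0 : Fin 2), (0 : Fin 2)) ∨ p = (1, 1) then q⁻¹ else 1)
    else if p = ((0 : Fin 2), (1 : Fin 2)) ∧ r = (1, 0) then q⁻¹ - q else 0

def Rgl2Tilde (k : Type*) [Field k] (q : k) : Matrix (I2 2) (I2 2) k :=
  Matrix.of fun p r =>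
    if p = r then (if p = ((0 : Fin 2), (0 : Fin 2)) ∨ p = (1, 1) then q⁻¹ else 1)
    else if p = ((0 : Fin 2), (1 : Fin 2)) ∧ r = (1, 0) then q⁻¹ ^ 3 - q⁻¹ else 0

theorem Rgl2_mul_Rgl2Inv {q : k} (hq : q ≠ 0) : Rgl2 k q * Rgl2Inv k q = 1 := by
  ext ⟨i, j⟩ ⟨a, b⟩
  fin_cases i <;> fin_cases j <;> fin_cases a <;> fin_cases b <;>
    simp [Rgl2, Rgl2Inv, mul_apply, one_apply, Fintype.sum_prod_type, Fin.sum_univ_two] <;>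
    field_simp

theorem partialTranspose_Rgl2_mul_Rgl2Tilde {q : k} (hq : q ≠ 0) :
    partialTranspose (Rgl2 k q) * partialTranspose (Rgl2Tilde k q) = 1 := by
  ext ⟨i, j⟩ ⟨a, b⟩
  fin_cases i <;> fin_cases j <;> fin_cases a <;> fin_cases b <;>
    simp [Rgl2, Rgl2Tilde, partialTranspose, mul_apply, one_apply, Fintype.sum_prod_type,
      Fin.sum_univ_two] <;>
    field_simp
  ring

theorem eq_Rgl2Inv_of_mul_Rgl2 {q : k} (hq : q ≠ 0) {Rinv : Matrix (I2 2) (I2 2) k}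
    (h : Rinv * Rgl2 k q = 1) : Rinv = Rgl2Inv k q :=
  left_inv_eq_right_inv h (Rgl2_mul_Rgl2Inv hq)

theorem eq_Rgl2Tilde_of_isSecondInverse {q : k} (hq : q ≠ 0) {Rtil : Matrix (I2 2) (I2 2) k}
    (h : IsSecondInverse (Rgl2 k q) Rtil) : Rtil = Rgl2Tilde k q :=
  partialTranspose_involutive.injective <|
    left_inv_eq_right_inv (isSecondInverse_iff.1 h).1 (partialTranspose_Rgl2_mul_Rgl2Tilde hq)

def gl2DimWitness (k : Type*) [Field k] (q : k) : I2 2 × I2 2 → k := fun P =>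
  if P = (((0 : Fin 2), (0 : Fin 2)), ((0 : Fin 2), (0 : Fin 2))) then q⁻¹ ^ 2
  else if P = (((0 : Fin 2), (0 : Fin 2)), (1, 1)) then q⁻¹ ^ 2 - q⁻¹ ^ 4
  else if P = (((0 : Fin 2), (1 : Fin 2)), (0, 1)) then q⁻¹ ^ 6
  else if P = (((1 : Fin 2), (0 : Fin 2)), (1, 0)) then q⁻¹ ^ 2
  else if P = (((1 : Fin 2), (1 : Fin 2)), (0, 0)) then 1 - q⁻¹ ^ 2
  else if P = (((1 : Fin 2), (1 : Fin 2)), (1, 1)) then q⁻¹ ^ 4 - q⁻¹ ^ 2 + 1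
  else 0

theorem gl2DimWitness_dotProduct (q : k) (v : I2 2 × I2 2 → k) :
    gl2DimWitness k q ⬝ᵥ v =
      q⁻¹ ^ 2 * v ((0, 0), (0, 0)) + (q⁻¹ ^ 2 - q⁻¹ ^ 4) * v ((0, 0), (1, 1)) +
        q⁻¹ ^ 6 * v ((0, 1), (0, 1)) + q⁻¹ ^ 2 * v ((1, 0), (1, 0)) +
        (1 - q⁻¹ ^ 2) * v ((1, 1), (0, 0)) + (q⁻¹ ^ 4 - q⁻¹ ^ 2 + 1) * v ((1, 1), (1, 1)) := by
  simp [dotProduct, gl2DimWitness, Fintype.sum_prod_type, Fin.sum_univ_two]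
  ring

theorem gl2DimWitness_dotProduct_vec_one (q : k) :
    gl2DimWitness k q ⬝ᵥ (1 : Matrix (I2 2) (I2 2) k).vec = 1 + q⁻¹ ^ 2 + q⁻¹ ^ 4 + q⁻¹ ^ 6 := by
  simp [gl2DimWitness_dotProduct, one_apply]
  ring

theorem gl2DimWitness_vecMul {q : k} (hq : q ≠ 0) :
    gl2DimWitness k q ᵥ* partialTranspose (bigR (Rgl2 k q) (Rgl2Inv k q) (Rgl2Tilde k q)) =
      (1 : Matrix (I2 2) (I2 2) k).vec := by
  ext ⟨⟨a, b⟩, ⟨c, d⟩⟩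
  rw [vecMul, gl2DimWitness_dotProduct]
  fin_cases a <;> fin_cases b <;> fin_cases c <;> fin_cases d <;>
    simp only [partialTranspose, bigR, Rgl2, Rgl2Inv, Rgl2Tilde, of_apply, vec, one_apply,
      Fin.sum_univ_two, Prod.mk.injEq, Fin.zero_eta, Fin.mk_one, Fin.isValue, zero_ne_one,
      one_ne_zero, and_self, and_true, and_false, true_and, false_and, or_false, false_or,
      reduceIte, mul_zero, zero_mul, add_zero, zero_add, mul_one, one_mul] <;>
    field_simp <;> ring

theorem gl2_braided_dimension_general (q : k) (hq0 : q ≠ 0)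
    (hgen : ∀ m : ℕ, 0 < m → (q ^ 2) ^ m ≠ 1)
    (Rinv Rtil : Matrix (I2 2) (I2 2) k)
    (h2 : Rinv * Rgl2 k q = 1)
    (ht : IsSecondInverse (Rgl2 k q) Rtil)
    (Btil : Matrix (I2 2 × I2 2) (I2 2 × I2 2) k)
    (hB : IsBigSecondInverse (bigR (Rgl2 k q) Rinv Rtil) Btil) :
    braidedDim Btil = (1 - (q⁻¹) ^ 8) / (1 - (q⁻¹) ^ 2) := by
  rw [eq_Rgl2Inv_of_mul_Rgl2 hq0 h2, eq_Rgl2Tilde_of_isSecondInverse hq0 ht] at hB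
  have hne : 1 - q⁻¹ ^ 2 ≠ 0 := by
    rw [sub_ne_zero, ne_comm, inv_pow, inv_ne_one]
    simpa using hgen 1 one_pos
  rw [braidedDim_eq_vec_one_dotProduct,
    dotProduct_mulVec_eq_of_vecMul_eq (isBigSecondInverse_iff.1 hB).2 (gl2DimWitness_vecMul hq0),
    gl2DimWitness_dotProduct_vec_one, eq_div_iff hne]
  ring

/-- For the standard `GL_q(2)` R-matrix with generic `q`, the braided dimension
`dim(𝓛) = 𝐑̃^K_J{}^J_K` equals `[4]_q = (1−q⁻⁸)/(1−q⁻²)`. -/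
theorem gl2_braided_dimension (q : k) (hq0 : q ≠ 0)
    (hgen : ∀ m : ℕ, 0 < m → (q ^ 2) ^ m ≠ 1)
    (Rinv Rtil : Matrix (I2 2) (I2 2) k)
    (h1 : Rgl2 k q * Rinv = 1) (h2 : Rinv * Rgl2 k q = 1)
    (ht : IsSecondInverse (Rgl2 k q) Rtil)
    (Btil : Matrix (I2 2 × I2 2) (I2 2 × I2 2) k)
    (hB : IsBigSecondInverse (bigR (Rgl2 k q) Rinv Rtil) Btil) :
    braidedDim Btil = (1 - (q⁻¹) ^ 8) / (1 - (q⁻¹) ^ 2) :=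
  gl2_braided_dimension_general q hq0 hgen Rinv Rtil h2 ht Btil hB
end
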